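/- Fix q ∈ ℕ+, a set of sites [n], and a subset R ⊆ [n]. Let τ_R denote the maximally mixed state on the tensor factors of R (i.e., identity divided by 2^{q|R|}) and let σ be any density matrix on the tensor factors of the complement of R. Then for every matrix X on (ℂ^{2^q})^{⊗n}: Σ_{a ∈ S¹_R} ‖[A^a, X]‖²_{τ_R ⊗ σ} ≥ 4^q · ‖X − τ_R ⊗ Tr_R[X]‖²_{τ_R ⊗ σ}, where Tr_R denotes the partial trace over the factors of R. (Spectral gap of the depolarizing semigroup.) -/

import Mathlib

open scoped BigOperators
open MeasureTheory
open scoped ComplexOrder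

noncomputable section

/-- Configuration space of a chain of `n` sites, each consisting of `q` qubits
(local dimension `2^q`). -/
abbrev SpinIdx (n q : ℕ) : Type := Fin n → Fin q → Fin 2

/-- Matrices (linear operators) on the chain Hilbert space `(ℂ^{2^q})^{⊗ n}`. -/
abbrev Mat (n q : ℕ) : Type := Matrix (SpinIdx n q) (SpinIdx n q) ℂ

/-- Operator norm (largest singular value) of a complex matrix. -/
def opNorm {m : Type*} [Fintype m] [DecidableEq m] (M : Matrix m m ℂ) : ℝ :=
  ‖LinearMap.toContinuousLinearMap (Matrix.toEuclideanLin M)‖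

/-- Matrix exponential. -/
def mexp {m : Type*} [Fintype m] [DecidableEq m] (M : Matrix m m ℂ) : Matrix m m ℂ :=
  NormedSpace.exp M

open Classical in
/-- The positive semidefinite square root of a matrix (junk value `0` if the matrix is
not positive semidefinite). -/
def msqrt {m : Type*} [Fintype m] [DecidableEq m] (ρ : Matrix m m ℂ) : Matrix m m ℂ :=
  if h : ρ.PosSemidef then
    (h.1.eigenvectorUnitary : Matrix m m ℂ) *
      Matrix.diagonal ((↑) ∘ (Real.sqrt ·) ∘ h.1.eigenvalues) *
      (star h.1.eigenvectorUnitary : Matrix m m ℂ)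
  else 0

/-- KMS inner product `⟨X,Y⟩_ρ = Tr[X† ρ^{1/2} Y ρ^{1/2}]`. -/
def kmsInner {m : Type*} [Fintype m] [DecidableEq m] (ρ X Y : Matrix m m ℂ) : ℂ :=
  (X.conjTranspose * msqrt ρ * Y * msqrt ρ).trace

/-- Squared KMS norm `‖X‖_ρ²`. -/
def kmsNormSq {m : Type*} [Fintype m] [DecidableEq m] (ρ X : Matrix m m ℂ) : ℝ :=
  (kmsInner ρ X X).re

/-- KMS norm `‖X‖_ρ`. -/
def kmsNorm {m : Type*} [Fintype m] [DecidableEq m] (ρ X : Matrix m m ℂ) : ℝ :=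
  Real.sqrt (kmsNormSq ρ X)

/-- Commutator `[A,B] = AB - BA`. -/
def mComm {m : Type*} [Fintype m] (A B : Matrix m m ℂ) : Matrix m m ℂ :=
  A * B - B * A

/-- The four Pauli matrices `I, X, Y, Z`. -/
def pauli : Fin 4 → Matrix (Fin 2) (Fin 2) ℂ :=
  ![1, !![0, 1; 1, 0], !![0, -Complex.I; Complex.I, 0], !![1, 0; 0, -1]]

/-- The single-site Pauli jump operator at site `i` given by the Pauli word `p`:
it acts as `⊗_{k<q} pauli (p k)` on the `i`-th site and as the identity elsewhere. -/
def pauliOp (n q : ℕ) (i : Fin n) (p : Fin q → Fin 4) : Mat n q :=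
  Matrix.of fun a b =>
    (∏ k : Fin q, pauli (p k) (a i k) (b i k)) *
      (if Function.update a i (b i) = b then 1 else 0)

/-- `X` is supported on the set `S` of sites: it acts as the identity on all tensor
factors outside `S` (i.e. `X = X_S ⊗ I_{S^c}`), stated entrywise. -/
def SupportedOn {n q : ℕ} (S : Set (Fin n)) (X : Mat n q) : Prop :=
  (∀ a b a' b' : SpinIdx n q,
      (∀ i ∈ S, a i = a' i) → (∀ i ∈ S, b i = b' i) →
      (∀ i ∉ S, a i = b i) → (∀ i ∉ S, a' i = b' i) →
      X a b = X a' b') ∧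
  ∀ a b : SpinIdx n q, (∃ i ∉ S, a i ≠ b i) → X a b = 0

/-- `h` is a family of nearest-neighbour terms of a 1D Hamiltonian: each `h b` is Hermitian, has
operator norm at most 1, is supported on the sites `{b, b+1}`, and the (nonexistent) last
link is zero. -/
def IsOneDimTerms (n q : ℕ) (h : Fin n → Mat n q) : Prop :=
  (∀ b, (h b).IsHermitian) ∧
  (∀ b, opNorm (h b) ≤ 1) ∧
  (∀ b : Fin n, SupportedOn {i : Fin n | (i : ℕ) = (b : ℕ) ∨ (i : ℕ) = (b : ℕ) + 1} (h b)) ∧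
  ∀ b : Fin n, (b : ℕ) + 1 = n → h b = 0

/-- `H` is a 1D Hamiltonian with nearest-neighbour interactions of strength at most 1. -/
def IsOneDimHamiltonian (n q : ℕ) (H : Mat n q) : Prop :=
  ∃ h : Fin n → Mat n q, IsOneDimTerms n q h ∧ H = ∑ b, h b

/-- The Gibbs state `e^{-βH}/Tr[e^{-βH}]`. -/
def gibbs {m : Type*} [Fintype m] [DecidableEq m] (β : ℝ) (H : Matrix m m ℂ) : Matrix m m ℂ :=
  ((mexp ((-β : ℂ) • H)).trace)⁻¹ • mexp ((-β : ℂ) • H)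

/-- Lattice distance between two subsets of the chain. -/
def chainDist {n : ℕ} (A C : Finset (Fin n)) : ℕ :=
  sInf {d : ℕ | ∃ i ∈ A, ∃ j ∈ C, d = ((i : ℤ) - (j : ℤ)).natAbs}

/-- A contiguous set of sites. -/
def IsChainInterval {n : ℕ} (A : Finset (Fin n)) : Prop :=
  ∀ i ∈ A, ∀ k ∈ A, ∀ j : Fin n, i ≤ j → j ≤ k → j ∈ A

/-- The interval of sites `[s, t)` of the chain. -/
def chainInterval (n s t : ℕ) : Finset (Fin n) :=
  Finset.univ.filter fun i => s ≤ (i : ℕ) ∧ (i : ℕ) < t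

/-- Entrywise (Bochner) integral of a matrix-valued function on `ℝ`. -/
def mIntegral {m : Type*} [Fintype m] (F : ℝ → Matrix m m ℂ) : Matrix m m ℂ :=
  Matrix.of fun i j => ∫ t : ℝ, F t i j

/-- Heisenberg evolution `e^{iHt} A e^{-iHt}`. -/
def heis {m : Type*} [Fintype m] [DecidableEq m] (H : Matrix m m ℂ) (t : ℝ)
    (A : Matrix m m ℂ) : Matrix m m ℂ :=
  mexp ((Complex.I * (t : ℂ)) • H) * A * mexp ((-(Complex.I * (t : ℂ))) • H)

/-- Gaussian filter function `f_σ(t) = e^{-σ²t²} (σ √(2/π))^{1/2}`. -/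
def fGauss (σ t : ℝ) : ℝ :=
  Real.exp (-(σ ^ 2 * t ^ 2)) * Real.sqrt (σ * Real.sqrt (2 / Real.pi))

/-- Operator Fourier transform `Â_σ(ω) = (2π)^{-1/2} ∫ e^{iHt} A e^{-iHt} e^{-iωt} f_σ(t) dt`. -/
def oft {m : Type*} [Fintype m] [DecidableEq m] (σ : ℝ) (H A : Matrix m m ℂ) (ω : ℝ) :
    Matrix m m ℂ :=
  ((Real.sqrt (2 * Real.pi) : ℂ))⁻¹ •
    mIntegral fun t => ((fGauss σ t : ℂ) * Complex.exp (-(Complex.I * (ω : ℂ) * (t : ℂ)))) • heis H t A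

/-- Time-evolved operator Fourier transform `Â_σ(ω,t) = e^{iHt} Â_σ(ω) e^{-iHt}`. -/
def oftT {m : Type*} [Fintype m] [DecidableEq m] (σ : ℝ) (H A : Matrix m m ℂ) (ω t : ℝ) :
    Matrix m m ℂ :=
  heis H t (oft σ H A ω)

/-- The time weight `g(t) = 1/(β cosh(2πt/β))`. -/
def gWeight (β t : ℝ) : ℝ := (β * Real.cosh (2 * Real.pi * t / β))⁻¹

/-- The Gaussian frequency filter `h_G(ω) = e^{-1/4} e^{-ω²β²/2}`. -/
def hGaussW (β ω : ℝ) : ℝ := Real.exp (-(1 / 4 : ℝ)) * Real.exp (-(ω ^ 2 * β ^ 2) / 2)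

/-- The Dirichlet form `⟨O, -L†[O]⟩_ρ` of the exactly detailed-balanced Lindbladian with all
single-site Pauli jumps, Gaussian weight, and energy width `σ = 1/β`. -/
def dirichletL (n q : ℕ) (β : ℝ) (H ρ O : Mat n q) : ℝ :=
  ∑ i : Fin n, ∑ p : Fin q → Fin 4,
    ∫ ω : ℝ, ∫ t : ℝ,
      gWeight β t * hGaussW β ω *
        kmsNormSq ρ (mComm (oftT (1 / β) H (pauliOp n q i p) ω t) O)

/-- The Dirichlet form `Σ_a ‖[A^a, O]‖_ρ²` of the generator `K` with all single-site
Pauli jumps. -/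
def dirichletK (n q : ℕ) (ρ O : Mat n q) : ℝ :=
  ∑ i : Fin n, ∑ p : Fin q → Fin 4, kmsNormSq ρ (mComm (pauliOp n q i p) O)

/-- `E` is the KMS-orthogonal projection (w.r.t. the state `ρ`) onto the subspace of operators
supported on the complement of `R`: the spectral conditional expectation `Ẽ_R`. -/
def IsKMSProjOnto {n q : ℕ} (ρ : Mat n q) (R : Set (Fin n)) (E : Mat n q → Mat n q) : Prop :=
  (∀ O, SupportedOn Rᶜ (E O)) ∧
  ∀ O Z, SupportedOn Rᶜ Z → kmsInner ρ Z (O - E O) = 0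


/-- Configurations of the qubits of the sites in `R`. -/
abbrev CfgIn (n q : ℕ) (R : Finset (Fin n)) : Type := {i : Fin n // i ∈ R} → Fin q → Fin 2

/-- Configurations of the qubits of the sites outside `R`. -/
abbrev CfgOut (n q : ℕ) (R : Finset (Fin n)) : Type := {i : Fin n // i ∉ R} → Fin q → Fin 2

/-- The tensor product `τ_R ⊗ σ` of the maximally mixed state on the factors of `R` with a
state `σ` on the factors of the complement of `R`. -/
def tauTensor (n q : ℕ) (R : Finset (Fin n))
    (σ : Matrix (CfgOut n q R) (CfgOut n q R) ℂ) : Mat n q :=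
  Matrix.of fun a b =>
    (((2 : ℝ) ^ (q * R.card) : ℝ) : ℂ)⁻¹ *
      (if ∀ i ∈ R, a i = b i then σ (fun i => a i.1) (fun i => b i.1) else 0)

/-- The partial trace `Tr_R[X]` over the tensor factors of `R`. -/
def ptraceIn (n q : ℕ) (R : Finset (Fin n)) (X : Mat n q) :
    Matrix (CfgOut n q R) (CfgOut n q R) ℂ :=
  Matrix.of fun a' b' =>
    ∑ c : CfgIn n q R,
      X (fun i => if h : i ∈ R then c ⟨i, h⟩ else a' ⟨i, h⟩)
        (fun i => if h : i ∈ R then c ⟨i, h⟩ else b' ⟨i, h⟩)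

namespace Depol
open Finset Matrix

variable {n q : ℕ}

def mergeIO (A : Finset (Fin n)) (u : CfgIn n q A) (v : CfgOut n q A) : SpinIdx n q :=
  fun j => if h : j ∈ A then u ⟨j, h⟩ else v ⟨j, h⟩

def resIn (A : Finset (Fin n)) (a : SpinIdx n q) : CfgIn n q A := fun j => a j.1
def resOut (A : Finset (Fin n)) (a : SpinIdx n q) : CfgOut n q A := fun j => a j.1

@[simp] lemma resIn_mergeIO (A : Finset (Fin n)) (u : CfgIn n q A) (v : CfgOut n q A) :
    resIn A (mergeIO A u v) = u := by
  funext j; simp [resIn, mergeIO, j.2]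

@[simp] lemma resOut_mergeIO (A : Finset (Fin n)) (u : CfgIn n q A) (v : CfgOut n q A) :
    resOut A (mergeIO A u v) = v := by
  funext j; simp [resOut, mergeIO, j.2]

@[simp] lemma mergeIO_res (A : Finset (Fin n)) (a : SpinIdx n q) :
    mergeIO A (resIn A a) (resOut A a) = a := by
  funext j; by_cases h : j ∈ A <;> simp [mergeIO, resIn, resOut, h]

def splitE (A : Finset (Fin n)) : SpinIdx n q ≃ CfgIn n q A × CfgOut n q A where
  toFun a := (resIn A a, resOut A a)
  invFun uv := mergeIO A uv.1 uv.2
  left_inv a := mergeIO_res A a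
  right_inv uv := by ext <;> simp

lemma sum_split {M : Type*} [AddCommMonoid M] (A : Finset (Fin n)) (f : SpinIdx n q → M) :
    ∑ a : SpinIdx n q, f a = ∑ u : CfgIn n q A, ∑ v : CfgOut n q A, f (mergeIO A u v) := by
  rw [Fintype.sum_equiv (splitE A) f (fun uv => f (mergeIO A uv.1 uv.2)) (fun a => by simp [splitE])]
  exact Fintype.sum_prod_type _

lemma agree_iff (A : Finset (Fin n)) (a b : SpinIdx n q) :
    (∀ j ∈ A, a j = b j) ↔ resIn A a = resIn A b := by
  constructor
  · intro h; funext j; exact h j.1 j.2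
  · intro h j hj
    exact congrFun h ⟨j, hj⟩


lemma mergeIO_mem {A : Finset (Fin n)} {j : Fin n} (h : j ∈ A) (u : CfgIn n q A)
    (v : CfgOut n q A) : mergeIO A u v j = u ⟨j, h⟩ := dif_pos h

lemma mergeIO_not_mem {A : Finset (Fin n)} {j : Fin n} (h : j ∉ A) (u : CfgIn n q A)
    (v : CfgOut n q A) : mergeIO A u v j = v ⟨j, h⟩ := dif_neg h

lemma card_cfgIn (A : Finset (Fin n)) : Fintype.card (CfgIn n q A) = 2 ^ (q * A.card) := by
  rw [Fintype.card_fun]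
  rw [show Fintype.card (Fin q → Fin 2) = 2 ^ q by simp [Fintype.card_fun]]
  rw [Fintype.card_coe, ← pow_mul]

/-- Conditional expectation over the sites of `A` (w.r.t. maximally mixed state). -/
def condE (A : Finset (Fin n)) (X : Mat n q) : Mat n q :=
  Matrix.of fun a b =>
    ((2 : ℂ) ^ (q * A.card))⁻¹ *
      if ∀ i ∈ A, a i = b i then
        ∑ c : CfgIn n q A, X (mergeIO A c (resOut A a)) (mergeIO A c (resOut A b)) else 0

lemma two_pow_ne (m : ℕ) : ((2 : ℂ) ^ m) ≠ 0 := pow_ne_zero _ two_ne_zero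

@[simp] lemma condE_empty (X : Mat n q) : condE (∅ : Finset (Fin n)) X = X := by
  ext a b
  have h1 : ∀ (x : SpinIdx n q) (c : CfgIn n q (∅ : Finset (Fin n))),
      mergeIO ∅ c (resOut ∅ x) = x := by
    intro x c; funext j; rw [mergeIO_not_mem (Finset.notMem_empty j)]; rfl
  simp only [condE, Matrix.of_apply]
  rw [if_pos (by intro i hi; exact absurd hi (Finset.notMem_empty i))]
  rw [Finset.sum_congr rfl (fun c _ => by rw [h1 a c, h1 b c])]
  rw [Finset.sum_const, Finset.card_univ, card_cfgIn]
  simp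

lemma condE_condE (A : Finset (Fin n)) (X : Mat n q) : condE A (condE A X) = condE A X := by
  ext a b
  simp only [condE, Matrix.of_apply]
  by_cases hab : ∀ i ∈ A, a i = b i
  · rw [if_pos hab, if_pos hab]
    have key : ∀ c : CfgIn n q A,
        ((2 : ℂ) ^ (q * A.card))⁻¹ *
          (if ∀ i ∈ A, mergeIO A c (resOut A a) i = mergeIO A c (resOut A b) i then
            ∑ c' : CfgIn n q A,
              X (mergeIO A c' (resOut A (mergeIO A c (resOut A a))))
                (mergeIO A c' (resOut A (mergeIO A c (resOut A b)))) else 0)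
        = ((2 : ℂ) ^ (q * A.card))⁻¹ *
            ∑ c' : CfgIn n q A, X (mergeIO A c' (resOut A a)) (mergeIO A c' (resOut A b)) := by
      intro c
      rw [if_pos (fun i hi => by rw [mergeIO_mem hi, mergeIO_mem hi])]
      simp only [resOut_mergeIO]
    rw [Finset.sum_congr rfl (fun c _ => key c)]
    rw [Finset.sum_const, Finset.card_univ, card_cfgIn]
    rw [nsmul_eq_mul]
    push_cast
    rw [← mul_assoc ((2:ℂ) ^ (q * A.card)), mul_inv_cancel₀ (two_pow_ne _), one_mul]
  · rw [if_neg hab, if_neg hab]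
  
lemma condE_sub (A : Finset (Fin n)) (X Y : Mat n q) :
    condE A (X - Y) = condE A X - condE A Y := by
  ext a b
  simp only [condE, Matrix.of_apply, Matrix.sub_apply]
  by_cases hab : ∀ i ∈ A, a i = b i
  · simp only [if_pos hab, Finset.sum_sub_distrib, mul_sub]
  · simp [if_neg hab]

def combine (A B : Finset (Fin n)) (c : CfgIn n q A) (d : CfgIn n q B) : CfgIn n q (A ∪ B) :=
  fun j => if h : j.1 ∈ A then c ⟨j.1, h⟩ else d ⟨j.1, (Finset.mem_union.mp j.2).resolve_left h⟩

def unionE {A B : Finset (Fin n)} (hAB : Disjoint A B) :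
    CfgIn n q (A ∪ B) ≃ CfgIn n q A × CfgIn n q B where
  toFun e := (fun j => e ⟨j.1, Finset.mem_union_left _ j.2⟩,
              fun j => e ⟨j.1, Finset.mem_union_right _ j.2⟩)
  invFun cd := combine A B cd.1 cd.2
  left_inv e := by
    funext j
    rcases j with ⟨j, hj⟩
    by_cases h : j ∈ A
    · simp [combine, h]
    · simp [combine, h]
  right_inv cd := by
    rcases cd with ⟨c, d⟩
    ext j
    · simp [combine, j.2]
    · have : j.1 ∉ A := Finset.disjoint_right.mp hAB j.2
      simp [combine, this]

lemma sum_cfg_union {M : Type*} [AddCommMonoid M] {A B : Finset (Fin n)} (hAB : Disjoint A B)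
    (f : CfgIn n q (A ∪ B) → M) :
    ∑ e : CfgIn n q (A ∪ B), f e = ∑ c : CfgIn n q A, ∑ d : CfgIn n q B, f (combine A B c d) := by
  rw [Fintype.sum_equiv (unionE hAB) f (fun cd => f (combine A B cd.1 cd.2))
    (fun e => by congr 1; exact ((unionE hAB).left_inv e).symm)]
  exact Fintype.sum_prod_type _

lemma mergeIO_comp {A B : Finset (Fin n)} (hAB : Disjoint A B) (a : SpinIdx n q)
    (c : CfgIn n q A) (d : CfgIn n q B) :
    mergeIO B d (resOut B (mergeIO A c (resOut A a)))
      = mergeIO (A ∪ B) (combine A B c d) (resOut (A ∪ B) a) := by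
  funext j
  by_cases hB : j ∈ B
  · have hA : j ∉ A := Finset.disjoint_right.mp hAB hB
    rw [mergeIO_mem hB, mergeIO_mem (Finset.mem_union_right _ hB)]
    simp [combine, hA]
  · rw [mergeIO_not_mem hB]
    by_cases hA : j ∈ A
    · have : mergeIO A c (resOut A a) j = c ⟨j, hA⟩ := mergeIO_mem hA _ _
      rw [show (resOut B (mergeIO A c (resOut A a))) ⟨j, hB⟩
            = mergeIO A c (resOut A a) j from rfl, this,
        mergeIO_mem (Finset.mem_union_left _ hA)]
      simp [combine, hA]
    · have hAB' : j ∉ A ∪ B := by simp [hA, hB]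
      rw [show (resOut B (mergeIO A c (resOut A a))) ⟨j, hB⟩
            = mergeIO A c (resOut A a) j from rfl, mergeIO_not_mem hA,
        mergeIO_not_mem hAB']
      rfl

lemma condE_union {A B : Finset (Fin n)} (hAB : Disjoint A B) (X : Mat n q) :
    condE B (condE A X) = condE (A ∪ B) X := by
  ext a b
  simp only [condE, Matrix.of_apply]
  by_cases hA : ∀ i ∈ A, a i = b i
  · by_cases hB : ∀ i ∈ B, a i = b i
    · have hU : ∀ i ∈ A ∪ B, a i = b i := by
        intro i hi; rcases Finset.mem_union.mp hi with h | h
        · exact hA i h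
        · exact hB i h
      rw [if_pos hB, if_pos hU]
      have key : ∀ d : CfgIn n q B,
          ((2 : ℂ) ^ (q * A.card))⁻¹ *
            (if ∀ i ∈ A, mergeIO B d (resOut B a) i = mergeIO B d (resOut B b) i then
              ∑ c : CfgIn n q A,
                X (mergeIO A c (resOut A (mergeIO B d (resOut B a))))
                  (mergeIO A c (resOut A (mergeIO B d (resOut B b)))) else 0)
          = ((2 : ℂ) ^ (q * A.card))⁻¹ *
              ∑ c : CfgIn n q A,
                X (mergeIO (B ∪ A) (combine B A d c) (resOut (B ∪ A) a))
                  (mergeIO (B ∪ A) (combine B A d c) (resOut (B ∪ A) b)) := by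
        intro d
        rw [if_pos (by
          intro i hi
          have hiB : i ∉ B := Finset.disjoint_left.mp hAB hi
          rw [mergeIO_not_mem hiB, mergeIO_not_mem hiB]
          exact hA i hi)]
        congr 1
        refine Finset.sum_congr rfl (fun c _ => ?_)
        rw [mergeIO_comp hAB.symm a d c, mergeIO_comp hAB.symm b d c]
      rw [Finset.sum_congr rfl (fun d _ => key d)]
      rw [← Finset.mul_sum]
      rw [show ∀ z : ℂ, ((2:ℂ) ^ (q*B.card))⁻¹ * (((2:ℂ) ^ (q*A.card))⁻¹ * z)
            = ((2:ℂ) ^ (q*(A ∪ B).card))⁻¹ * z from fun z => by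
        rw [Finset.card_union_of_disjoint hAB, ← mul_assoc, ← mul_inv, ← pow_add,
          mul_add, add_comm (q * A.card)]]
      congr 1
      rw [show A ∪ B = B ∪ A from Finset.union_comm A B] at *
      rw [sum_cfg_union hAB.symm]
    · have hU : ¬ (∀ i ∈ A ∪ B, a i = b i) :=
        fun hU => hB (fun i hi => hU i (Finset.mem_union_right _ hi))
      rw [if_neg hB, if_neg hU]
      ring
  · have key : ∀ d : CfgIn n q B,
        (if ∀ i ∈ A, mergeIO B d (resOut B a) i = mergeIO B d (resOut B b) i then
          ∑ c : CfgIn n q A,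
            X (mergeIO A c (resOut A (mergeIO B d (resOut B a))))
              (mergeIO A c (resOut A (mergeIO B d (resOut B b)))) else 0) = 0 := by
      intro d
      rw [if_neg (fun h => hA (fun i hi => by
        have hiB : i ∉ B := Finset.disjoint_left.mp hAB hi
        have := h i hi
        rwa [mergeIO_not_mem hiB, mergeIO_not_mem hiB] at this))]
    have hU : ¬ (∀ i ∈ A ∪ B, a i = b i) :=
      fun hU => hA (fun i hi => hU i (Finset.mem_union_left _ hi))
    rw [if_neg hU, mul_zero]
    by_cases hB : ∀ i ∈ B, a i = b i
    · rw [if_pos hB, Finset.sum_congr rfl (fun d _ => by rw [key d, mul_zero])]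
      simp
    · rw [if_neg hB, mul_zero]


section Generic
variable {m : Type*} [Fintype m] [DecidableEq m]

open scoped MatrixOrder in
lemma msqrt_eq {ρ : Matrix m m ℂ} (h : ρ.PosSemidef) : msqrt ρ = CFC.sqrt ρ := by
  rw [CFC.sqrt_eq_cfc, cfc_nnreal_eq_real _ ρ, h.1.cfc_eq, msqrt, dif_pos h]
  simp only [Matrix.IsHermitian.cfc, Unitary.conjStarAlgAut_apply]
  congr 3
  funext i
  simp [max_eq_left (h.eigenvalues_nonneg i)]

open scoped MatrixOrder in
lemma msqrt_posSemidef (ρ : Matrix m m ℂ) : (msqrt ρ).PosSemidef := by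
  by_cases h : ρ.PosSemidef
  · rw [msqrt_eq h]; exact Matrix.nonneg_iff_posSemidef.mp (CFC.sqrt_nonneg ρ)
  · unfold msqrt; rw [dif_neg h]; exact Matrix.PosSemidef.zero

lemma msqrt_herm (ρ : Matrix m m ℂ) : (msqrt ρ).IsHermitian := (msqrt_posSemidef ρ).1

open scoped MatrixOrder in
lemma msqrt_mul_self {ρ : Matrix m m ℂ} (h : ρ.PosSemidef) : msqrt ρ * msqrt ρ = ρ := by
  rw [msqrt_eq h]; exact CFC.sqrt_mul_sqrt_self ρ h.nonneg

open scoped MatrixOrder in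
lemma msqrt_unique {ρ T : Matrix m m ℂ} (hρ : ρ.PosSemidef) (hT : T.PosSemidef)
    (h2 : T * T = ρ) : msqrt ρ = T := by
  rw [msqrt_eq hρ]
  exact CFC.sqrt_unique h2 hT.nonneg

lemma kmsInner_conj (ρ X Y : Matrix m m ℂ) :
    kmsInner ρ Y X = starRingEnd ℂ (kmsInner ρ X Y) := by
  unfold kmsInner
  rw [show starRingEnd ℂ ((Xᴴ * msqrt ρ * Y * msqrt ρ).trace)
      = ((Xᴴ * msqrt ρ * Y * msqrt ρ)ᴴ).trace from (Matrix.trace_conjTranspose _).symm]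
  simp only [Matrix.conjTranspose_mul, Matrix.conjTranspose_conjTranspose,
    (msqrt_herm ρ).eq]
  rw [Matrix.trace_mul_comm]
  simp only [Matrix.mul_assoc]

lemma trace_conjTranspose_mul_self_re_nonneg (W : Matrix m m ℂ) :
    0 ≤ ((Wᴴ * W).trace).re := by
  have h : ((Wᴴ * W).trace) = ∑ i, ∑ j, (starRingEnd ℂ) (W j i) * W j i := by
    simp [Matrix.trace, Matrix.mul_apply, Matrix.conjTranspose_apply, Matrix.diag]
  rw [h, Complex.re_sum]
  refine Finset.sum_nonneg fun i _ => ?_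
  rw [Complex.re_sum]
  refine Finset.sum_nonneg fun j _ => ?_
  rw [Complex.mul_re, Complex.conj_re, Complex.conj_im]
  nlinarith [sq_nonneg (W j i).re, sq_nonneg (W j i).im]

lemma sandwich_re_nonneg (S : Matrix m m ℂ) (hS : S.PosSemidef) (Z : Matrix m m ℂ) :
    0 ≤ ((Zᴴ * S * Z * S).trace).re := by
  obtain ⟨U, hherm, hUU⟩ : ∃ U : Matrix m m ℂ, Uᴴ = U ∧ U * U = S :=
    ⟨msqrt S, msqrt_herm S, msqrt_mul_self hS⟩
  have key : (Zᴴ * S * Z * S).trace = ((U * Z * U)ᴴ * (U * Z * U)).trace := by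
    rw [← hUU]
    simp only [Matrix.conjTranspose_mul, hherm]
    rw [Matrix.trace_mul_comm]
    simp only [Matrix.mul_assoc]
    rw [Matrix.trace_mul_comm U (U * (Zᴴ * (U * (U * Z))))]
    simp only [Matrix.mul_assoc]
  rw [key]
  exact trace_conjTranspose_mul_self_re_nonneg _

lemma kmsNormSq_nonneg (ρ Z : Matrix m m ℂ) : 0 ≤ kmsNormSq ρ Z :=
  sandwich_re_nonneg (msqrt ρ) (msqrt_posSemidef ρ) Z

lemma kmsNormSq_sub (ρ U V : Matrix m m ℂ) :
    kmsNormSq ρ (U - V) = kmsNormSq ρ U - 2 * (kmsInner ρ U V).re + kmsNormSq ρ V := by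
  have h : kmsInner ρ (U - V) (U - V)
      = kmsInner ρ U U - kmsInner ρ U V - kmsInner ρ V U + kmsInner ρ V V := by
    simp only [kmsInner, Matrix.conjTranspose_sub, Matrix.sub_mul, Matrix.mul_sub,
      Matrix.trace_sub]
    ring
  have h2 : (kmsInner ρ V U).re = (kmsInner ρ U V).re := by
    rw [kmsInner_conj]; exact Complex.conj_re _
  unfold kmsNormSq
  rw [h]
  simp only [Complex.sub_re, Complex.add_re]
  rw [h2]; ring

end Generic

section Tau
variable (R : Finset (Fin n)) (σ : Matrix (CfgOut n q R) (CfgOut n q R) ℂ)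

def ccR (q : ℕ) (R : Finset (Fin n)) : ℝ := ((Real.sqrt 2) ^ (q * R.card))⁻¹

lemma ccR_nonneg : 0 ≤ ccR q R := by
  unfold ccR; positivity

lemma ccR_sq : (ccR q R : ℝ) * ccR q R = ((2:ℝ) ^ (q * R.card))⁻¹ := by
  unfold ccR
  rw [← mul_inv, ← mul_pow, Real.mul_self_sqrt (by norm_num)]

def sqT : Mat n q :=
  Matrix.of fun a b =>
    ((ccR q R : ℝ) : ℂ) *
      if ∀ i ∈ R, a i = b i then msqrt σ (resOut R a) (resOut R b) else 0

lemma agree_mergeIO_left (a : SpinIdx n q) (u : CfgIn n q R) (v : CfgOut n q R) :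
    (∀ i ∈ R, a i = mergeIO R u v i) ↔ resIn R a = u := by
  rw [agree_iff, resIn_mergeIO]

lemma agree_mergeIO_right (b : SpinIdx n q) (u : CfgIn n q R) (v : CfgOut n q R) :
    (∀ i ∈ R, mergeIO R u v i = b i) ↔ resIn R a₀ = resIn R a₀ ∧ u = resIn R b := by
  rw [agree_iff, resIn_mergeIO]; simp

lemma sqT_apply_merge_left (a : SpinIdx n q) (u : CfgIn n q R) (v : CfgOut n q R) :
    sqT R σ a (mergeIO R u v)
      = ((ccR q R : ℝ) : ℂ) * if resIn R a = u then msqrt σ (resOut R a) v else 0 := by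
  simp only [sqT, Matrix.of_apply]
  rw [if_congr (agree_mergeIO_left R a u v) rfl rfl, resOut_mergeIO]

lemma sqT_apply_merge_right (b : SpinIdx n q) (u : CfgIn n q R) (v : CfgOut n q R) :
    sqT R σ (mergeIO R u v) b
      = ((ccR q R : ℝ) : ℂ) * if u = resIn R b then msqrt σ v (resOut R b) else 0 := by
  simp only [sqT, Matrix.of_apply]
  have : (∀ i ∈ R, mergeIO R u v i = b i) ↔ u = resIn R b := by
    rw [show (∀ i ∈ R, mergeIO R u v i = b i) ↔ (∀ i ∈ R, b i = mergeIO R u v i) from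
      ⟨fun h i hi => (h i hi).symm, fun h i hi => (h i hi).symm⟩,
      agree_mergeIO_left, eq_comm]
  rw [if_congr this rfl rfl, resOut_mergeIO]

lemma coeff_eq : (((ccR q R : ℝ) : ℂ)) * ((ccR q R : ℝ) : ℂ)
    = ((((2:ℝ) ^ (q * R.card)) : ℝ) : ℂ)⁻¹ := by
  rw [← Complex.ofReal_mul, ccR_sq]
  push_cast
  rfl

lemma sqT_sq (hσ : σ.PosSemidef) : sqT R σ * sqT R σ = tauTensor n q R σ := by
  ext a b
  rw [Matrix.mul_apply, sum_split R]
  have summand : ∀ (u : CfgIn n q R) (v : CfgOut n q R),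
      sqT R σ a (mergeIO R u v) * sqT R σ (mergeIO R u v) b
        = if resIn R a = u then
            (((ccR q R : ℝ) : ℂ) * ((ccR q R : ℝ) : ℂ)) *
              (if resIn R a = resIn R b then
                msqrt σ (resOut R a) v * msqrt σ v (resOut R b) else 0)
          else 0 := by
    intro u v
    rw [sqT_apply_merge_left, sqT_apply_merge_right]
    by_cases h1 : resIn R a = u
    · by_cases h2 : resIn R a = resIn R b
      · have h3 : u = resIn R b := h1 ▸ h2
        rw [if_pos h1, if_pos h1, if_pos h2, if_pos h3]
        ring
      · have h3 : ¬ (u = resIn R b) := fun h => h2 (h1.trans h)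
        rw [if_pos h1, if_neg h3, if_pos h1, if_neg h2]
        ring
    · rw [if_neg h1, if_neg h1, mul_zero, zero_mul]
  rw [Finset.sum_congr rfl (fun u _ => Finset.sum_congr rfl (fun v _ => summand u v))]
  rw [Finset.sum_congr rfl (fun u (_ : u ∈ Finset.univ) => by
    rw [Finset.sum_ite_irrel, Finset.sum_const_zero])]
  rw [Finset.sum_ite_eq, if_pos (Finset.mem_univ _)]
  rw [← Finset.mul_sum, Finset.sum_ite_irrel, Finset.sum_const_zero]
  rw [show (if resIn R a = resIn R b then
        ∑ v : CfgOut n q R, msqrt σ (resOut R a) v * msqrt σ v (resOut R b) else (0:ℂ))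
      = if resIn R a = resIn R b then σ (resOut R a) (resOut R b) else 0 from by
    rw [← Matrix.mul_apply, msqrt_mul_self hσ]]
  rw [coeff_eq]
  simp only [tauTensor, Matrix.of_apply]
  rw [if_congr (agree_iff R a b) rfl rfl]
  rfl

lemma sqT_herm : (sqT R σ).IsHermitian := by
  apply Matrix.ext
  intro a b
  simp only [Matrix.conjTranspose_apply, sqT, Matrix.of_apply, star_mul', Complex.conj_ofReal]
  by_cases h : ∀ i ∈ R, a i = b i
  · have h' : ∀ i ∈ R, b i = a i := fun i hi => (h i hi).symm
    rw [if_pos h', if_pos h, (msqrt_herm σ).apply (resOut R a) (resOut R b)]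
    simp [Complex.conj_ofReal]
  · have h' : ¬ ∀ i ∈ R, b i = a i := fun h' => h (fun i hi => (h' i hi).symm)
    rw [if_neg h', if_neg h]
    simp

lemma sqT_psd (hσ : σ.PosSemidef) : (sqT R σ).PosSemidef := by
  refine Matrix.PosSemidef.of_dotProduct_mulVec_nonneg (sqT_herm R σ) (fun x => ?_)
  have inner : ∀ (u : CfgIn n q R) (v : CfgOut n q R),
      (∑ b, sqT R σ (mergeIO R u v) b * x b)
        = ((ccR q R : ℝ) : ℂ) * ∑ w, msqrt σ v w * x (mergeIO R u w) := by
    intro u v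
    rw [sum_split R]
    have key : ∀ (u' : CfgIn n q R) (w : CfgOut n q R),
        sqT R σ (mergeIO R u v) (mergeIO R u' w) * x (mergeIO R u' w)
          = if u = u' then ((ccR q R : ℝ) : ℂ) * (msqrt σ v w * x (mergeIO R u' w)) else 0 := by
      intro u' w
      rw [sqT_apply_merge_left, resIn_mergeIO, resOut_mergeIO]
      by_cases h : u = u'
      · rw [if_pos h, if_pos h]; ring
      · rw [if_neg h, if_neg h, mul_zero, zero_mul]
    rw [Finset.sum_congr rfl (fun u' _ => Finset.sum_congr rfl (fun w _ => key u' w))]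
    rw [Finset.sum_congr rfl (fun u' (_ : u' ∈ Finset.univ) => by
      rw [Finset.sum_ite_irrel, Finset.sum_const_zero])]
    rw [Finset.sum_ite_eq, if_pos (Finset.mem_univ _), Finset.mul_sum]
  have expand : dotProduct (star x) (sqT R σ *ᵥ x)
      = ((ccR q R : ℝ) : ℂ) * ∑ u : CfgIn n q R,
          dotProduct (star (fun v => x (mergeIO R u v)))
            (msqrt σ *ᵥ (fun v => x (mergeIO R u v))) := by
    simp only [dotProduct, Matrix.mulVec, Pi.star_apply]
    rw [sum_split R]
    rw [Finset.sum_congr rfl (fun u _ => Finset.sum_congr rfl (fun v _ => by rw [inner u v]))]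
    rw [Finset.mul_sum]
    refine Finset.sum_congr rfl (fun u _ => ?_)
    rw [Finset.mul_sum]
    refine Finset.sum_congr rfl (fun v _ => ?_)
    ring
  rw [expand]
  refine mul_nonneg (by
    rw [show ((0:ℂ)) = ((0:ℝ):ℂ) from rfl, Complex.real_le_real]
    exact ccR_nonneg (q := q) R) (Finset.sum_nonneg fun u _ => ?_)
  exact (msqrt_posSemidef σ).dotProduct_mulVec_nonneg _

lemma tauTensor_psd (hσ : σ.PosSemidef) : (tauTensor n q R σ).PosSemidef := by
  have h := Matrix.posSemidef_conjTranspose_mul_self (sqT R σ)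
  rwa [(sqT_herm R σ).eq, sqT_sq R σ hσ] at h

lemma msqrt_tauTensor (hσ : σ.PosSemidef) : msqrt (tauTensor n q R σ) = sqT R σ :=
  msqrt_unique (tauTensor_psd R σ hσ) (sqT_psd R σ hσ) (sqT_sq R σ hσ)

lemma condE_R (X : Mat n q) : condE R X = tauTensor n q R (ptraceIn n q R X) := by
  ext a b
  simp only [condE, tauTensor, ptraceIn, Matrix.of_apply]
  by_cases h : ∀ i ∈ R, a i = b i
  · rw [if_pos h, if_pos h]
    congr 1
    · push_cast; norm_num
  · rw [if_neg h, if_neg h, mul_zero, mul_zero]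

lemma agree_merge_merge (A : Finset (Fin n)) (u u' : CfgIn n q A) (v v' : CfgOut n q A) :
    (∀ i ∈ A, mergeIO A u v i = mergeIO A u' v' i) ↔ u = u' := by
  rw [agree_iff, resIn_mergeIO, resIn_mergeIO]

lemma sqT_mul_mul (M : Mat n q) (a b : SpinIdx n q) :
    (sqT R σ * M * sqT R σ) a b
      = (((ccR q R : ℝ) : ℂ) * ((ccR q R : ℝ) : ℂ)) *
          ∑ wo : CfgOut n q R,
            (∑ uo : CfgOut n q R,
              msqrt σ (resOut R a) uo *
                M (mergeIO R (resIn R a) uo) (mergeIO R (resIn R b) wo)) *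
              msqrt σ wo (resOut R b) := by
  have inner : ∀ (w : SpinIdx n q), (sqT R σ * M) a w = ((ccR q R : ℝ) : ℂ) *
      ∑ uo, msqrt σ (resOut R a) uo * M (mergeIO R (resIn R a) uo) w := by
    intro w
    rw [Matrix.mul_apply, sum_split R]
    rw [Finset.sum_congr rfl (fun u _ => Finset.sum_congr rfl (fun uo _ => show
      sqT R σ a (mergeIO R u uo) * M (mergeIO R u uo) w
        = if resIn R a = u then
            ((ccR q R : ℝ) : ℂ) * (msqrt σ (resOut R a) uo * M (mergeIO R u uo) w) else 0 from by
      rw [sqT_apply_merge_left]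
      by_cases h : resIn R a = u
      · rw [if_pos h, if_pos h]; ring
      · rw [if_neg h, if_neg h, mul_zero, zero_mul]))]
    rw [Finset.sum_congr rfl (fun u (_ : u ∈ Finset.univ) => by
      rw [Finset.sum_ite_irrel, Finset.sum_const_zero])]
    rw [Finset.sum_ite_eq, if_pos (Finset.mem_univ _), Finset.mul_sum]
  rw [Matrix.mul_apply, sum_split R]
  rw [Finset.sum_congr rfl (fun w _ => Finset.sum_congr rfl (fun wo _ => show
    (sqT R σ * M) a (mergeIO R w wo) * sqT R σ (mergeIO R w wo) b
      = if w = resIn R b then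
          (((ccR q R : ℝ) : ℂ) * ((ccR q R : ℝ) : ℂ)) *
            ((∑ uo, msqrt σ (resOut R a) uo *
                M (mergeIO R (resIn R a) uo) (mergeIO R w wo)) * msqrt σ wo (resOut R b))
        else 0 from by
    rw [inner, sqT_apply_merge_right]
    by_cases h : w = resIn R b
    · rw [if_pos h, if_pos h]; ring
    · rw [if_neg h, if_neg h, mul_zero, mul_zero]))]
  rw [Finset.sum_congr rfl (fun w (_ : w ∈ Finset.univ) => by
    rw [Finset.sum_ite_irrel, Finset.sum_const_zero])]
  rw [Finset.sum_ite_eq', if_pos (Finset.mem_univ _), Finset.mul_sum]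

lemma resOut_merge_subset {A : Finset (Fin n)} (hA : A ⊆ R) (x : SpinIdx n q)
    (c : CfgIn n q A) : resOut R (mergeIO A c (resOut A x)) = resOut R x := by
  funext j
  have hjA : j.1 ∉ A := fun hj => j.2 (hA hj)
  show mergeIO A c (resOut A x) j.1 = x j.1
  rw [mergeIO_not_mem hjA]; rfl

lemma merge_swap {A : Finset (Fin n)} (hA : A ⊆ R) (a : SpinIdx n q) (c : CfgIn n q A)
    (uo : CfgOut n q R) :
    mergeIO A c (resOut A (mergeIO R (resIn R a) uo))
      = mergeIO R (resIn R (mergeIO A c (resOut A a))) uo := by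
  funext j
  by_cases hjA : j ∈ A
  · rw [mergeIO_mem hjA, mergeIO_mem (hA hjA)]
    show _ = mergeIO A c (resOut A a) j
    rw [mergeIO_mem hjA]
  · rw [mergeIO_not_mem hjA]
    by_cases hjR : j ∈ R
    · show mergeIO R (resIn R a) uo j = _
      rw [mergeIO_mem hjR, mergeIO_mem hjR]
      show a j = mergeIO A c (resOut A a) j
      rw [mergeIO_not_mem hjA]; rfl
    · show mergeIO R (resIn R a) uo j = _
      rw [mergeIO_not_mem hjR, mergeIO_not_mem hjR]

lemma sum_rot {i1 i2 i3 : Type*} [Fintype i1] [Fintype i2] [Fintype i3]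
    (F : i1 → i2 → i3 → ℂ) :
    ∑ x : i1, ∑ y : i2, ∑ z : i3, F x y z = ∑ y : i2, ∑ z : i3, ∑ x : i1, F x y z :=
  calc ∑ x : i1, ∑ y : i2, ∑ z : i3, F x y z
      = ∑ y : i2, ∑ x : i1, ∑ z : i3, F x y z := Finset.sum_comm
    _ = ∑ y : i2, ∑ z : i3, ∑ x : i1, F x y z :=
        Finset.sum_congr rfl (fun y _ => Finset.sum_comm)

lemma condE_TT {A : Finset (Fin n)} (hA : A ⊆ R) (M : Mat n q) :
    sqT R σ * condE A M * sqT R σ = condE A (sqT R σ * M * sqT R σ) := by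
  ext a b
  rw [sqT_mul_mul]
  have entry : ∀ (uo wo : CfgOut n q R),
      condE A M (mergeIO R (resIn R a) uo) (mergeIO R (resIn R b) wo)
        = ((2:ℂ)^(q*A.card))⁻¹ *
            if ∀ i ∈ A, a i = b i then
              ∑ c : CfgIn n q A,
                M (mergeIO R (resIn R (mergeIO A c (resOut A a))) uo)
                  (mergeIO R (resIn R (mergeIO A c (resOut A b))) wo) else 0 := by
    intro uo wo
    simp only [condE, Matrix.of_apply]
    have hcond : (∀ i ∈ A, mergeIO R (resIn R a) uo i = mergeIO R (resIn R b) wo i)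
        ↔ (∀ i ∈ A, a i = b i) := by
      constructor
      · intro h i hi
        have := h i hi
        rwa [mergeIO_mem (hA hi), mergeIO_mem (hA hi)] at this
      · intro h i hi
        rw [mergeIO_mem (hA hi), mergeIO_mem (hA hi)]
        exact h i hi
    rw [if_congr hcond rfl rfl]
    congr 1
    by_cases h : ∀ i ∈ A, a i = b i
    · rw [if_pos h, if_pos h]
      refine Finset.sum_congr rfl (fun c _ => ?_)
      rw [← merge_swap R hA a c uo, ← merge_swap R hA b c wo]
    · rw [if_neg h, if_neg h]
  rw [Finset.sum_congr rfl (fun wo (_ : wo ∈ Finset.univ) => by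
    rw [Finset.sum_congr rfl (fun uo (_ : uo ∈ Finset.univ) => by rw [entry uo wo])])]
  simp only [condE, Matrix.of_apply]
  have inner2 : ∀ c : CfgIn n q A,
      (sqT R σ * M * sqT R σ) (mergeIO A c (resOut A a)) (mergeIO A c (resOut A b))
        = (((ccR q R : ℝ) : ℂ) * ((ccR q R : ℝ) : ℂ)) *
            ∑ wo : CfgOut n q R,
              (∑ uo : CfgOut n q R,
                msqrt σ (resOut R a) uo *
                  M (mergeIO R (resIn R (mergeIO A c (resOut A a))) uo)
                    (mergeIO R (resIn R (mergeIO A c (resOut A b))) wo)) *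
                msqrt σ wo (resOut R b) := by
    intro c
    rw [sqT_mul_mul, resOut_merge_subset R hA a c, resOut_merge_subset R hA b c]
  rw [Finset.sum_congr rfl (fun c (_ : c ∈ Finset.univ) => inner2 c)]
  by_cases h : ∀ i ∈ A, a i = b i
  · simp only [if_pos h]
    simp only [Finset.mul_sum, Finset.sum_mul]
    conv_lhs => rw [← sum_rot]
    refine Finset.sum_congr rfl (fun c _ => ?_)
    refine Finset.sum_congr rfl (fun wo _ => ?_)
    refine Finset.sum_congr rfl (fun uo _ => ?_)
    ring
  · simp only [if_neg h, mul_zero, zero_mul, Finset.sum_const_zero]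

lemma trace_conjTranspose_mul_eq (X Z : Mat n q) :
    (Xᴴ * Z).trace = ∑ a, ∑ b, (starRingEnd ℂ) (X b a) * Z b a := by
  simp only [Matrix.trace, Matrix.diag, Matrix.mul_apply, Matrix.conjTranspose_apply]
  rfl

lemma condE_sadjL (A : Finset (Fin n)) (Y W : Mat n q) :
    (∑ a, ∑ b, (starRingEnd ℂ) ((condE A Y) b a) * W b a)
      = ((2:ℂ)^(q*A.card))⁻¹ * ∑ av : CfgOut n q A, ∑ bv : CfgOut n q A,
          ((starRingEnd ℂ) (∑ c : CfgIn n q A, Y (mergeIO A c bv) (mergeIO A c av))) *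
            (∑ α : CfgIn n q A, W (mergeIO A α bv) (mergeIO A α av)) := by
  rw [sum_split A]
  rw [Finset.sum_congr rfl (fun α (_ : α ∈ Finset.univ) =>
    Finset.sum_congr rfl (fun av (_ : av ∈ Finset.univ) => sum_split A _))]
  rw [Finset.sum_congr rfl (fun α (_ : α ∈ Finset.univ) =>
    Finset.sum_congr rfl (fun av (_ : av ∈ Finset.univ) =>
    Finset.sum_congr rfl (fun β (_ : β ∈ Finset.univ) =>
    Finset.sum_congr rfl (fun bv (_ : bv ∈ Finset.univ) => show
      (starRingEnd ℂ) ((condE A Y) (mergeIO A β bv) (mergeIO A α av))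
          * W (mergeIO A β bv) (mergeIO A α av)
        = if β = α then ((2:ℂ)^(q*A.card))⁻¹ *
            (((starRingEnd ℂ) (∑ c : CfgIn n q A, Y (mergeIO A c bv) (mergeIO A c av))) *
              W (mergeIO A β bv) (mergeIO A α av)) else 0 from by
      simp only [condE, Matrix.of_apply]
      rw [if_congr (agree_merge_merge A β α bv av) rfl rfl]
      by_cases hc : β = α
      · rw [if_pos hc, if_pos hc]
        simp only [resOut_mergeIO, _root_.map_mul, map_inv₀, map_pow]
        rw [show (starRingEnd ℂ) 2 = 2 from by
          rw [show ((2:ℂ)) = ((2:ℝ):ℂ) from by norm_num, Complex.conj_ofReal]]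
        ring
      · rw [if_neg hc, if_neg hc]
        simp))))]
  simp only [Finset.sum_ite_irrel, Finset.sum_const_zero, Finset.sum_ite_eq',
    Finset.mem_univ, if_true]
  rw [sum_rot]
  rw [Finset.mul_sum]
  refine Finset.sum_congr rfl (fun av _ => ?_)
  rw [Finset.mul_sum]
  refine Finset.sum_congr rfl (fun bv _ => ?_)
  rw [Finset.mul_sum, Finset.mul_sum]

lemma condE_sadjR (A : Finset (Fin n)) (Y W : Mat n q) :
    (∑ a, ∑ b, (starRingEnd ℂ) (Y b a) * (condE A W) b a)
      = ((2:ℂ)^(q*A.card))⁻¹ * ∑ av : CfgOut n q A, ∑ bv : CfgOut n q A,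
          ((starRingEnd ℂ) (∑ c : CfgIn n q A, Y (mergeIO A c bv) (mergeIO A c av))) *
            (∑ α : CfgIn n q A, W (mergeIO A α bv) (mergeIO A α av)) := by
  rw [sum_split A]
  rw [Finset.sum_congr rfl (fun α (_ : α ∈ Finset.univ) =>
    Finset.sum_congr rfl (fun av (_ : av ∈ Finset.univ) => sum_split A _))]
  rw [Finset.sum_congr rfl (fun α (_ : α ∈ Finset.univ) =>
    Finset.sum_congr rfl (fun av (_ : av ∈ Finset.univ) =>
    Finset.sum_congr rfl (fun β (_ : β ∈ Finset.univ) =>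
    Finset.sum_congr rfl (fun bv (_ : bv ∈ Finset.univ) => show
      (starRingEnd ℂ) (Y (mergeIO A β bv) (mergeIO A α av))
          * (condE A W) (mergeIO A β bv) (mergeIO A α av)
        = if β = α then
            ((starRingEnd ℂ) (Y (mergeIO A β bv) (mergeIO A α av))) *
            (((2:ℂ)^(q*A.card))⁻¹ *
              ∑ c : CfgIn n q A, W (mergeIO A c bv) (mergeIO A c av)) else 0 from by
      simp only [condE, Matrix.of_apply]
      rw [if_congr (agree_merge_merge A β α bv av) rfl rfl]
      by_cases hc : β = α
      · rw [if_pos hc, if_pos hc]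
        simp only [resOut_mergeIO]
      · rw [if_neg hc, if_neg hc]
        simp))))]
  simp only [Finset.sum_ite_irrel, Finset.sum_const_zero, Finset.sum_ite_eq',
    Finset.mem_univ, if_true]
  rw [sum_rot]
  rw [Finset.mul_sum]
  refine Finset.sum_congr rfl (fun av _ => ?_)
  rw [Finset.mul_sum]
  refine Finset.sum_congr rfl (fun bv _ => ?_)
  simp only [map_sum, Finset.mul_sum, Finset.sum_mul]
  rw [Finset.sum_comm]
  refine Finset.sum_congr rfl (fun x _ => ?_)
  refine Finset.sum_congr rfl (fun y _ => ?_)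
  ring

lemma condE_sadj (A : Finset (Fin n)) (X Z : Mat n q) :
    ((condE A X)ᴴ * Z).trace = (Xᴴ * condE A Z).trace := by
  rw [trace_conjTranspose_mul_eq, trace_conjTranspose_mul_eq, condE_sadjL, condE_sadjR]

lemma kmsInner_eq (hσ : σ.PosSemidef) (X Y : Mat n q) :
    kmsInner (tauTensor n q R σ) X Y = (Xᴴ * sqT R σ * Y * sqT R σ).trace := by
  unfold kmsInner
  rw [msqrt_tauTensor R σ hσ]

lemma kmsInner_condE (hσ : σ.PosSemidef) {A : Finset (Fin n)} (hA : A ⊆ R) (X Y : Mat n q) :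
    kmsInner (tauTensor n q R σ) X (condE A Y)
      = kmsInner (tauTensor n q R σ) (condE A X) Y := by
  rw [kmsInner_eq R σ hσ, kmsInner_eq R σ hσ]
  calc (Xᴴ * sqT R σ * condE A Y * sqT R σ).trace
      = (Xᴴ * (sqT R σ * condE A Y * sqT R σ)).trace := by
        simp only [Matrix.mul_assoc]
    _ = (Xᴴ * condE A (sqT R σ * Y * sqT R σ)).trace := by rw [condE_TT R σ hA]
    _ = ((condE A X)ᴴ * (sqT R σ * Y * sqT R σ)).trace := (condE_sadj A X _).symm
    _ = ((condE A X)ᴴ * sqT R σ * Y * sqT R σ).trace := by simp only [Matrix.mul_assoc]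

lemma kmsInner_condE_self (hσ : σ.PosSemidef) {A : Finset (Fin n)} (hA : A ⊆ R) (X : Mat n q) :
    kmsInner (tauTensor n q R σ) X (condE A X)
      = kmsInner (tauTensor n q R σ) (condE A X) (condE A X) := by
  conv_lhs => rw [← condE_condE A X]
  rw [kmsInner_condE R σ hσ hA]

lemma pythagoras (hσ : σ.PosSemidef) {A : Finset (Fin n)} (hA : A ⊆ R) (W : Mat n q) :
    kmsNormSq (tauTensor n q R σ) (W - condE A W)
      = kmsNormSq (tauTensor n q R σ) W - kmsNormSq (tauTensor n q R σ) (condE A W) := by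
  rw [kmsNormSq_sub]
  have h : (kmsInner (tauTensor n q R σ) W (condE A W)).re
      = kmsNormSq (tauTensor n q R σ) (condE A W) := by
    rw [kmsInner_condE_self R σ hσ hA]; rfl
  rw [h]; ring

lemma condE_contract (hσ : σ.PosSemidef) {A : Finset (Fin n)} (hA : A ⊆ R) (W : Mat n q) :
    kmsNormSq (tauTensor n q R σ) (condE A W) ≤ kmsNormSq (tauTensor n q R σ) W := by
  have h := kmsNormSq_nonneg (tauTensor n q R σ) (W - condE A W)
  rw [pythagoras R σ hσ hA] at h
  linarith

lemma condE_comm {A : Finset (Fin n)} {i : Fin n} (hi : i ∉ A) (X : Mat n q) :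
    condE {i} (condE A X) = condE A (condE {i} X) := by
  rw [condE_union (Finset.disjoint_singleton_right.mpr hi) X]
  rw [condE_union (Finset.disjoint_singleton_left.mpr hi) X]
  rw [Finset.union_comm]

lemma telescope (hσ : σ.PosSemidef) (X : Mat n q) (A : Finset (Fin n)) (hAR : A ⊆ R) :
    kmsNormSq (tauTensor n q R σ) X - kmsNormSq (tauTensor n q R σ) (condE A X)
      ≤ ∑ i ∈ A, kmsNormSq (tauTensor n q R σ) (X - condE {i} X) := by
  induction A using Finset.induction_on with
  | empty => simp [condE_empty]
  | @insert i A hi ih =>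
    have hA : A ⊆ R := fun j hj => hAR (Finset.mem_insert_of_mem hj)
    have hiR : ({i} : Finset (Fin n)) ⊆ R := by
      intro j hj
      rw [Finset.mem_singleton] at hj
      exact hj ▸ hAR (Finset.mem_insert_self i A)
    have e1 : condE (insert i A) X = condE {i} (condE A X) := by
      rw [condE_union (Finset.disjoint_singleton_right.mpr hi) X]
      rw [show A ∪ {i} = insert i A from by
        rw [Finset.union_comm]; exact (Finset.insert_eq i A).symm]
    have e2 : condE A X - condE {i} (condE A X) = condE A (X - condE {i} X) := by
      rw [condE_sub, condE_comm hi]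
    have hstep : kmsNormSq (tauTensor n q R σ) (condE A X)
        - kmsNormSq (tauTensor n q R σ) (condE (insert i A) X)
        ≤ kmsNormSq (tauTensor n q R σ) (X - condE {i} X) := by
      have p1 := pythagoras R σ hσ hiR (condE A X)
      rw [e2] at p1
      rw [e1]
      rw [← p1]
      exact condE_contract R σ hσ hA _
    have ih' := ih hA
    rw [Finset.sum_insert hi]
    linarith

end Tau

section Pauli

lemma pauli_entry_star (s : Fin 4) (x y : Fin 2) : star (pauli s y x) = pauli s x y := by
  fin_cases s <;> fin_cases x <;> fin_cases y <;>
    simp [pauli, Matrix.one_apply] <;> norm_num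

lemma pauli_mul_self (s : Fin 4) : pauli s * pauli s = 1 := by
  fin_cases s <;> ext x y <;> fin_cases x <;> fin_cases y <;>
    simp [pauli, Matrix.mul_apply, Fin.sum_univ_two, Matrix.one_apply] <;> norm_num
    <;> simp [Complex.ext_iff]

lemma pauli_twirl (x y u v : Fin 2) :
    ∑ s : Fin 4, pauli s x u * pauli s v y
      = 2 * ((if x = y then (1:ℂ) else 0) * (if u = v then 1 else 0)) := by
  fin_cases x <;> fin_cases y <;> fin_cases u <;> fin_cases v <;>
    rw [Fin.sum_univ_four] <;>
    simp [pauli, Matrix.one_apply] <;> norm_num [Complex.ext_iff]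

def siteE (i : Fin n) : SpinIdx n q ≃ (Fin q → Fin 2) × ({j : Fin n // j ≠ i} → Fin q → Fin 2) where
  toFun a := (a i, fun j => a j.1)
  invFun uy := fun j => if h : j = i then uy.1 else uy.2 ⟨j, h⟩
  left_inv a := by
    funext j
    by_cases h : j = i
    · subst h; simp
    · simp [h]
  right_inv uy := by
    rcases uy with ⟨u, y⟩
    ext j
    · simp
    · simp [j.2]

lemma siteE_symm_eq (i : Fin n) (x : SpinIdx n q) (u : Fin q → Fin 2) :
    (siteE (q := q) i).symm (u, fun j => x j.1) = Function.update x i u := by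
  funext j
  by_cases h : j = i
  · subst h; simp [siteE]
  · simp [siteE, h, Function.update_apply, if_neg h]

lemma sum_offsite (i : Fin n) (x : SpinIdx n q) (f : SpinIdx n q → ℂ) :
    (∑ c : SpinIdx n q, if ∀ j, j ≠ i → x j = c j then f c else 0)
      = ∑ u : Fin q → Fin 2, f (Function.update x i u) := by
  rw [Fintype.sum_equiv (siteE (q := q) i)
    (fun c => if ∀ j, j ≠ i → x j = c j then f c else 0)
    (fun uy => if (fun j : {j : Fin n // j ≠ i} => x j.1) = uy.2
      then f ((siteE (q := q) i).symm uy) else 0)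
    (fun c => by
      simp only [Equiv.symm_apply_apply]
      refine if_congr ?_ rfl rfl
      constructor
      · intro h; funext j; exact h j.1 j.2
      · intro h j hj; exact congrFun h ⟨j, hj⟩)]
  rw [Fintype.sum_prod_type]
  refine Finset.sum_congr rfl (fun u _ => ?_)
  rw [Finset.sum_ite_eq, if_pos (Finset.mem_univ _), siteE_symm_eq]

lemma sum_fn_prod {ι κ : Type*} [Fintype ι] [DecidableEq ι] [Fintype κ] (F : ι → κ → ℂ) :
    ∑ u : ι → κ, ∏ k : ι, F k (u k) = ∏ k : ι, ∑ w : κ, F k w := by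
  rw [Finset.prod_univ_sum]
  rw [Fintype.piFinset_univ]

lemma update_cond_iff {i : Fin n} {a b : SpinIdx n q} :
    (Function.update a i (b i) = b) ↔ ∀ j, j ≠ i → a j = b j := by
  rw [Function.update_eq_iff]
  simp

lemma pauliOp_apply (i : Fin n) (p : Fin q → Fin 4) (a b : SpinIdx n q) :
    pauliOp n q i p a b
      = if ∀ j, j ≠ i → a j = b j then ∏ k, pauli (p k) (a i k) (b i k) else 0 := by
  simp only [pauliOp, Matrix.of_apply, mul_ite, mul_one, mul_zero]
  exact if_congr update_cond_iff rfl rfl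

lemma pauliOp_herm (i : Fin n) (p : Fin q → Fin 4) : (pauliOp n q i p)ᴴ = pauliOp n q i p := by
  apply Matrix.ext
  intro a b
  rw [Matrix.conjTranspose_apply, pauliOp_apply, pauliOp_apply]
  by_cases h : ∀ j, j ≠ i → a j = b j
  · have h' : ∀ j, j ≠ i → b j = a j := fun j hj => (h j hj).symm
    rw [if_pos h', if_pos h]
    rw [show (star : ℂ → ℂ) = ⇑(starRingEnd ℂ) from rfl, map_prod]
    exact Finset.prod_congr rfl (fun k _ => pauli_entry_star (p k) (a i k) (b i k))
  · have h' : ¬ ∀ j, j ≠ i → b j = a j := fun h' => h (fun j hj => (h' j hj).symm)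
    rw [if_neg h', if_neg h, star_zero]

lemma prod_pauli_ite (x y : Fin 2 → Fin 2) (p : Fin q → Fin 4) :
    (∀ P : Prop, P) → True := fun _ => trivial

lemma pauliOp_mul_self (i : Fin n) (p : Fin q → Fin 4) :
    pauliOp n q i p * pauliOp n q i p = 1 := by
  ext a b
  rw [Matrix.mul_apply]
  rw [Finset.sum_congr rfl (fun c (_ : c ∈ Finset.univ) => show
    pauliOp n q i p a c * pauliOp n q i p c b
      = if ∀ j, j ≠ i → a j = c j then
          (∏ k, pauli (p k) (a i k) (c i k)) *
            (if ∀ j, j ≠ i → c j = b j then ∏ k, pauli (p k) (c i k) (b i k) else 0) else 0 from by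
    rw [pauliOp_apply, pauliOp_apply]
    by_cases h : ∀ j, j ≠ i → a j = c j
    · rw [if_pos h, if_pos h]
    · rw [if_neg h, if_neg h, zero_mul])]
  rw [sum_offsite i a]
  have upd_cond : ∀ u : Fin q → Fin 2,
      (∀ j, j ≠ i → Function.update a i u j = b j) ↔ (∀ j, j ≠ i → a j = b j) := by
    intro u
    constructor <;> intro h j hj
    · have := h j hj; rwa [Function.update_of_ne hj] at this
    · rw [Function.update_of_ne hj]; exact h j hj
  rw [Finset.sum_congr rfl (fun u (_ : u ∈ Finset.univ) => show
    (∏ k, pauli (p k) (a i k) (Function.update a i u i k)) *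
        (if ∀ j, j ≠ i → Function.update a i u j = b j then
          ∏ k, pauli (p k) (Function.update a i u i k) (b i k) else 0)
      = (∏ k, pauli (p k) (a i k) (u k)) *
          (if ∀ j, j ≠ i → a j = b j then ∏ k, pauli (p k) (u k) (b i k) else 0) from by
    rw [Function.update_self, if_congr (upd_cond u) rfl rfl])]
  by_cases hQ : ∀ j, j ≠ i → a j = b j
  · simp only [if_pos hQ]
    rw [Finset.sum_congr rfl (fun u (_ : u ∈ Finset.univ) =>
      (Finset.prod_mul_distrib
        (f := fun k => pauli (p k) (a i k) (u k))
        (g := fun k => pauli (p k) (u k) (b i k))).symm)]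
    rw [sum_fn_prod (fun k w => pauli (p k) (a i k) w * pauli (p k) w (b i k))]
    rw [Finset.prod_congr rfl (fun k (_ : k ∈ Finset.univ) => show
      (∑ w : Fin 2, pauli (p k) (a i k) w * pauli (p k) w (b i k))
        = if a i k = b i k then 1 else 0 from by
      rw [← Matrix.mul_apply, pauli_mul_self, Matrix.one_apply])]
    rw [Finset.prod_boole, Matrix.one_apply]
    by_cases hii : a i = b i
    · have hab : a = b := funext fun j => by
        by_cases hj : j = i
        · subst hj; exact hii
        · exact hQ j hj
      rw [if_pos (fun k (_ : k ∈ Finset.univ) => congrFun hii k), if_pos hab]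
    · have hab : a ≠ b := fun h => hii (by rw [h])
      rw [if_neg (fun h => hii (funext fun k => h k (Finset.mem_univ k))), if_neg hab]
  · simp only [if_neg hQ, mul_zero, Finset.sum_const_zero]
    have : a ≠ b := by
      intro hab
      exact hQ (fun j _ => by rw [hab])
    rw [Matrix.one_apply_ne this]

end Pauli

section PauliTau
variable (R : Finset (Fin n)) (σ : Matrix (CfgOut n q R) (CfgOut n q R) ℂ)

lemma resOut_update {i : Fin n} (hi : i ∈ R) (x : SpinIdx n q) (u : Fin q → Fin 2) :
    resOut R (Function.update x i u) = resOut R x := by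
  funext j
  have hj : j.1 ≠ i := fun h => j.2 (h ▸ hi)
  show Function.update x i u j.1 = x j.1
  rw [Function.update_of_ne hj]

lemma cond_update_iff {i : Fin n} (hi : i ∈ R) (a b : SpinIdx n q) (u : Fin q → Fin 2) :
    (∀ j ∈ R, Function.update a i u j = b j)
      ↔ (u = b i ∧ ∀ j ∈ R, j ≠ i → a j = b j) := by
  constructor
  · intro h
    refine ⟨?_, fun j hj hij => ?_⟩
    · have := h i hi; rwa [Function.update_self] at this
    · have := h j hj; rwa [Function.update_of_ne hij] at this
  · rintro ⟨hu, h⟩ j hj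
    by_cases hij : j = i
    · subst hij; rw [Function.update_self]; exact hu
    · rw [Function.update_of_ne hij]; exact h j hj hij

lemma cond_update_iff' {i : Fin n} (hi : i ∈ R) (a b : SpinIdx n q) (u : Fin q → Fin 2) :
    (∀ j ∈ R, a j = Function.update b i u j)
      ↔ (u = a i ∧ ∀ j ∈ R, j ≠ i → a j = b j) := by
  have h1 : (∀ j ∈ R, a j = Function.update b i u j)
      ↔ (∀ j ∈ R, Function.update b i u j = a j) :=
    ⟨fun h j hj => (h j hj).symm, fun h j hj => (h j hj).symm⟩
  rw [h1, cond_update_iff R hi]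
  constructor
  · rintro ⟨h2, h3⟩; exact ⟨h2, fun j hj hij => (h3 j hj hij).symm⟩
  · rintro ⟨h2, h3⟩; exact ⟨h2, fun j hj hij => (h3 j hj hij).symm⟩

lemma pauliOp_comm_sqT {i : Fin n} (hi : i ∈ R) (p : Fin q → Fin 4) :
    pauliOp n q i p * sqT R σ = sqT R σ * pauliOp n q i p := by
  ext a b
  rw [Matrix.mul_apply, Matrix.mul_apply]
  have lhs1 : ∀ c : SpinIdx n q, pauliOp n q i p a c * sqT R σ c b
      = if ∀ j, j ≠ i → a j = c j then (∏ k, pauli (p k) (a i k) (c i k)) * sqT R σ c b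
        else 0 := by
    intro c
    rw [pauliOp_apply]
    by_cases h : ∀ j, j ≠ i → a j = c j
    · rw [if_pos h, if_pos h]
    · rw [if_neg h, if_neg h, zero_mul]
  rw [Finset.sum_congr rfl (fun c _ => lhs1 c), sum_offsite i a]
  have lhs2 : ∀ u : Fin q → Fin 2,
      (∏ k, pauli (p k) (a i k) (Function.update a i u i k)) *
          sqT R σ (Function.update a i u) b
        = if u = b i then
            ((ccR q R : ℝ) : ℂ) * ((∏ k, pauli (p k) (a i k) (b i k)) *
              (if ∀ j ∈ R, j ≠ i → a j = b j then msqrt σ (resOut R a) (resOut R b) else 0))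
          else 0 := by
    intro u
    rw [Function.update_self]
    simp only [sqT, Matrix.of_apply]
    rw [resOut_update R hi]
    rw [if_congr (cond_update_iff R hi a b u) rfl rfl]
    by_cases h1 : u = b i
    · by_cases h2 : ∀ j ∈ R, j ≠ i → a j = b j
      · rw [if_pos ⟨h1, h2⟩, if_pos h1, if_pos h2, h1]
        ring
      · rw [if_pos h1, if_neg h2, if_neg (fun hc => h2 hc.2)]
        simp
    · rw [if_neg (fun hc => h1 hc.1), if_neg h1]
      simp
  rw [Finset.sum_congr rfl (fun u _ => lhs2 u)]
  rw [Finset.sum_ite_eq', if_pos (Finset.mem_univ _)]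
  have rhs1 : ∀ c : SpinIdx n q, sqT R σ a c * pauliOp n q i p c b
      = if ∀ j, j ≠ i → b j = c j then sqT R σ a c * (∏ k, pauli (p k) (c i k) (b i k))
        else 0 := by
    intro c
    rw [pauliOp_apply]
    have hsym : (∀ j, j ≠ i → c j = b j) ↔ (∀ j, j ≠ i → b j = c j) :=
      ⟨fun h j hj => (h j hj).symm, fun h j hj => (h j hj).symm⟩
    rw [if_congr hsym rfl rfl]
    by_cases h : ∀ j, j ≠ i → b j = c j
    · rw [if_pos h, if_pos h]
    · rw [if_neg h, if_neg h, mul_zero]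
  rw [Finset.sum_congr rfl (fun c _ => rhs1 c), sum_offsite i b]
  have rhs2 : ∀ u : Fin q → Fin 2,
      sqT R σ a (Function.update b i u) *
          (∏ k, pauli (p k) (Function.update b i u i k) (b i k))
        = if u = a i then
            ((ccR q R : ℝ) : ℂ) * ((∏ k, pauli (p k) (a i k) (b i k)) *
              (if ∀ j ∈ R, j ≠ i → a j = b j then msqrt σ (resOut R a) (resOut R b) else 0))
          else 0 := by
    intro u
    rw [Function.update_self]
    simp only [sqT, Matrix.of_apply]
    rw [resOut_update R hi]
    rw [if_congr (cond_update_iff' R hi a b u) rfl rfl]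
    by_cases h1 : u = a i
    · by_cases h2 : ∀ j ∈ R, j ≠ i → a j = b j
      · rw [if_pos ⟨h1, h2⟩, if_pos h1, if_pos h2, h1]
        ring
      · rw [if_pos h1, if_neg h2, if_neg (fun hc => h2 hc.2)]
        simp
    · rw [if_neg (fun hc => h1 hc.1), if_neg h1]
      simp
  rw [Finset.sum_congr rfl (fun u _ => rhs2 u)]
  rw [Finset.sum_ite_eq', if_pos (Finset.mem_univ _)]

def singEquiv (i : Fin n) : CfgIn n q ({i} : Finset (Fin n)) ≃ (Fin q → Fin 2) where
  toFun c := c ⟨i, Finset.mem_singleton_self i⟩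
  invFun u := fun _ => u
  left_inv c := by
    funext j
    have hj : j = ⟨i, Finset.mem_singleton_self i⟩ := Subtype.ext (Finset.mem_singleton.mp j.2)
    rw [hj]
  right_inv u := rfl

lemma merge_single (i : Fin n) (x : SpinIdx n q) (c : CfgIn n q ({i} : Finset (Fin n))) :
    mergeIO {i} c (resOut {i} x)
      = Function.update x i (c ⟨i, Finset.mem_singleton_self i⟩) := by
  funext j
  by_cases h : j = i
  · subst h
    rw [mergeIO_mem (Finset.mem_singleton_self j), Function.update_self]
  · rw [mergeIO_not_mem (fun hj => h (Finset.mem_singleton.mp hj)), Function.update_of_ne h]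
    rfl

lemma condE_single (i : Fin n) (X : Mat n q) (a b : SpinIdx n q) :
    condE {i} X a b = ((2:ℂ)^q)⁻¹ *
      (if a i = b i then
        ∑ u : Fin q → Fin 2, X (Function.update a i u) (Function.update b i u)
      else 0) := by
  simp only [condE, Matrix.of_apply, Finset.card_singleton, mul_one]
  congr 1
  refine if_congr ?_ ?_ rfl
  · constructor
    · intro h; exact h i (Finset.mem_singleton_self i)
    · intro h j hj; rw [Finset.mem_singleton] at hj; subst hj; exact h
  · rw [Fintype.sum_equiv (singEquiv (q := q) i) _
      (fun u => X (Function.update a i u) (Function.update b i u))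
      (fun c => by rw [merge_single, merge_single]; rfl)]

lemma pauli_sum_condE (i : Fin n) (X : Mat n q) :
    ∑ p : Fin q → Fin 4, pauliOp n q i p * X * pauliOp n q i p
      = ((4:ℂ)^q) • condE {i} X := by
  ext a b
  rw [Matrix.sum_apply]
  have hPXP : ∀ p : Fin q → Fin 4, (pauliOp n q i p * X * pauliOp n q i p) a b
      = ∑ v : Fin q → Fin 2, ∑ u : Fin q → Fin 2,
          (∏ k, pauli (p k) (a i k) (u k)) *
            X (Function.update a i u) (Function.update b i v) *
            (∏ k, pauli (p k) (v k) (b i k)) := by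
    intro p
    rw [Matrix.mul_apply]
    have step1 : ∀ d, (pauliOp n q i p * X) a d * pauliOp n q i p d b
        = if ∀ j, j ≠ i → b j = d j then
            (pauliOp n q i p * X) a d * (∏ k, pauli (p k) (d i k) (b i k)) else 0 := by
      intro d
      rw [pauliOp_apply]
      have hsym : (∀ j, j ≠ i → d j = b j) ↔ (∀ j, j ≠ i → b j = d j) :=
        ⟨fun h j hj => (h j hj).symm, fun h j hj => (h j hj).symm⟩
      rw [if_congr hsym rfl rfl]
      by_cases h : ∀ j, j ≠ i → b j = d j
      · rw [if_pos h, if_pos h]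
      · rw [if_neg h, if_neg h, mul_zero]
    rw [Finset.sum_congr rfl (fun d _ => step1 d), sum_offsite i b]
    refine Finset.sum_congr rfl (fun v _ => ?_)
    rw [Function.update_self]
    have step2 : (pauliOp n q i p * X) a (Function.update b i v)
        = ∑ u : Fin q → Fin 2, (∏ k, pauli (p k) (a i k) (u k)) *
            X (Function.update a i u) (Function.update b i v) := by
      rw [Matrix.mul_apply]
      have s1 : ∀ c, pauliOp n q i p a c * X c (Function.update b i v)
          = if ∀ j, j ≠ i → a j = c j then (∏ k, pauli (p k) (a i k) (c i k)) *
              X c (Function.update b i v) else 0 := by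
        intro c
        rw [pauliOp_apply]
        by_cases h : ∀ j, j ≠ i → a j = c j
        · rw [if_pos h, if_pos h]
        · rw [if_neg h, if_neg h, zero_mul]
      rw [Finset.sum_congr rfl (fun c _ => s1 c), sum_offsite i a]
      refine Finset.sum_congr rfl (fun u _ => ?_)
      rw [Function.update_self]
    rw [step2, Finset.sum_mul]
  rw [Finset.sum_congr rfl (fun p _ => hPXP p)]
  rw [sum_rot]
  have hp : ∀ (v u : Fin q → Fin 2),
      (∑ p : Fin q → Fin 4, (∏ k, pauli (p k) (a i k) (u k)) *
          X (Function.update a i u) (Function.update b i v) *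
          (∏ k, pauli (p k) (v k) (b i k)))
        = X (Function.update a i u) (Function.update b i v) *
            ((2:ℂ)^q * ((if a i = b i then (1:ℂ) else 0) * (if u = v then (1:ℂ) else 0))) := by
    intro v u
    rw [Finset.sum_congr rfl (fun p (_ : p ∈ Finset.univ) => show
      (∏ k, pauli (p k) (a i k) (u k)) *
          X (Function.update a i u) (Function.update b i v) *
          (∏ k, pauli (p k) (v k) (b i k))
        = X (Function.update a i u) (Function.update b i v) *
            ∏ k, (pauli (p k) (a i k) (u k) * pauli (p k) (v k) (b i k)) from by
      rw [Finset.prod_mul_distrib]; ring)]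
    rw [← Finset.mul_sum]
    congr 1
    rw [sum_fn_prod (fun k s => pauli s (a i k) (u k) * pauli s (v k) (b i k))]
    rw [Finset.prod_congr rfl (fun k (_ : k ∈ Finset.univ) =>
      pauli_twirl (a i k) (b i k) (u k) (v k))]
    rw [Finset.prod_mul_distrib, Finset.prod_const, Finset.prod_mul_distrib,
      Finset.prod_boole, Finset.prod_boole, Finset.card_univ, Fintype.card_fin]
    by_cases e1 : a i = b i
    · by_cases e2 : u = v
      · rw [if_pos (fun k _ => congrFun e1 k), if_pos e1,
          if_pos (fun k _ => congrFun e2 k), if_pos e2]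
      · rw [if_neg (show ¬ (∀ k ∈ Finset.univ, u k = v k) from
            fun h => e2 (funext fun k => h k (Finset.mem_univ k))), if_neg e2]
        simp
    · rw [if_neg (show ¬ (∀ k ∈ Finset.univ, a i k = b i k) from
          fun h => e1 (funext fun k => h k (Finset.mem_univ k))), if_neg e1]
      simp
  rw [Finset.sum_congr rfl (fun v (_ : v ∈ Finset.univ) =>
    Finset.sum_congr rfl (fun u (_ : u ∈ Finset.univ) => (hp v u).trans (show
      X (Function.update a i u) (Function.update b i v) *
          ((2:ℂ)^q * ((if a i = b i then (1:ℂ) else 0) * (if u = v then (1:ℂ) else 0)))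
        = if u = v then (2:ℂ)^q * ((if a i = b i then (1:ℂ) else 0) *
            X (Function.update a i u) (Function.update b i v)) else 0 from by
      by_cases h : u = v
      · rw [if_pos h, if_pos h]; ring
      · rw [if_neg h, if_neg h]; simp)))]
  simp only [Finset.sum_ite_eq', Finset.mem_univ, if_true]
  rw [← Finset.mul_sum]
  rw [Matrix.smul_apply, condE_single, smul_eq_mul]
  have h4 : ((4:ℂ))^q = (2:ℂ)^q * (2:ℂ)^q := by
    rw [show ((4:ℂ)) = 2 * 2 from by norm_num, mul_pow]
  by_cases h : a i = b i
  · rw [if_pos h]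
    simp only [if_pos h, one_mul]
    rw [h4]
    field_simp
  · rw [if_neg h]
    simp only [if_neg h, zero_mul, mul_zero, Finset.sum_const_zero]

lemma kmsInner_sum_right {m : Type*} [Fintype m] [DecidableEq m] (ρ X : Matrix m m ℂ)
    {ι : Type*} (s : Finset ι) (Y : ι → Matrix m m ℂ) :
    kmsInner ρ X (∑ j ∈ s, Y j) = ∑ j ∈ s, kmsInner ρ X (Y j) := by
  unfold kmsInner
  rw [Matrix.mul_sum, Matrix.sum_mul, Matrix.trace_sum]

lemma kmsInner_smul_right {m : Type*} [Fintype m] [DecidableEq m] (ρ X Y : Matrix m m ℂ)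
    (z : ℂ) : kmsInner ρ X (z • Y) = z * kmsInner ρ X Y := by
  unfold kmsInner
  rw [Matrix.mul_smul, Matrix.smul_mul, Matrix.trace_smul, smul_eq_mul]

lemma hPTP {i : Fin n} (hi : i ∈ R) (p : Fin q → Fin 4) :
    pauliOp n q i p * sqT R σ * pauliOp n q i p = sqT R σ := by
  rw [pauliOp_comm_sqT R σ hi p, Matrix.mul_assoc, pauliOp_mul_self, Matrix.mul_one]

lemma kms_P_left (hσ : σ.PosSemidef) {i : Fin n} (hi : i ∈ R) (p : Fin q → Fin 4)
    (X : Mat n q) :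
    kmsInner (tauTensor n q R σ) (pauliOp n q i p * X) (pauliOp n q i p * X)
      = kmsInner (tauTensor n q R σ) X X := by
  rw [kmsInner_eq R σ hσ, kmsInner_eq R σ hσ]
  rw [Matrix.conjTranspose_mul, pauliOp_herm]
  have h2 : ∀ Z : Mat n q, pauliOp n q i p * (sqT R σ * (pauliOp n q i p * Z))
      = sqT R σ * Z := by
    intro Z
    rw [← Matrix.mul_assoc, ← Matrix.mul_assoc, hPTP R σ hi p]
  simp only [Matrix.mul_assoc]
  rw [h2]

lemma kms_P_right (hσ : σ.PosSemidef) {i : Fin n} (hi : i ∈ R) (p : Fin q → Fin 4)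
    (X : Mat n q) :
    kmsInner (tauTensor n q R σ) (X * pauliOp n q i p) (X * pauliOp n q i p)
      = kmsInner (tauTensor n q R σ) X X := by
  rw [kmsInner_eq R σ hσ, kmsInner_eq R σ hσ]
  rw [Matrix.conjTranspose_mul, pauliOp_herm]
  simp only [Matrix.mul_assoc]
  rw [pauliOp_comm_sqT R σ hi p]
  rw [Matrix.trace_mul_comm]
  simp only [Matrix.mul_assoc]
  rw [pauliOp_mul_self, Matrix.mul_one]

lemma kms_P_cross (hσ : σ.PosSemidef) {i : Fin n} (hi : i ∈ R) (p : Fin q → Fin 4)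
    (X : Mat n q) :
    kmsInner (tauTensor n q R σ) (pauliOp n q i p * X) (X * pauliOp n q i p)
      = kmsInner (tauTensor n q R σ) X (pauliOp n q i p * X * pauliOp n q i p) := by
  rw [kmsInner_eq R σ hσ, kmsInner_eq R σ hσ]
  rw [Matrix.conjTranspose_mul, pauliOp_herm]
  have h2 : ∀ Z : Mat n q, pauliOp n q i p * (sqT R σ * Z)
      = sqT R σ * (pauliOp n q i p * Z) := by
    intro Z
    rw [← Matrix.mul_assoc, pauliOp_comm_sqT R σ hi p, Matrix.mul_assoc]
  simp only [Matrix.mul_assoc]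
  rw [h2]

lemma persite (hσ : σ.PosSemidef) {i : Fin n} (hi : i ∈ R) (X : Mat n q) :
    ∑ p : Fin q → Fin 4, kmsNormSq (tauTensor n q R σ) (mComm (pauliOp n q i p) X)
      = 2 * (4:ℝ)^q * kmsNormSq (tauTensor n q R σ) (X - condE {i} X) := by
  have hiR : ({i} : Finset (Fin n)) ⊆ R := by
    intro j hj; rw [Finset.mem_singleton] at hj; exact hj ▸ hi
  have per_p : ∀ p : Fin q → Fin 4,
      kmsNormSq (tauTensor n q R σ) (mComm (pauliOp n q i p) X)
        = 2 * kmsNormSq (tauTensor n q R σ) X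
          - 2 * (kmsInner (tauTensor n q R σ) X
              (pauliOp n q i p * X * pauliOp n q i p)).re := by
    intro p
    unfold mComm
    rw [kmsNormSq_sub]
    unfold kmsNormSq
    rw [kms_P_left R σ hσ hi p X, kms_P_right R σ hσ hi p X, kms_P_cross R σ hσ hi p X]
    ring
  rw [Finset.sum_congr rfl (fun p _ => per_p p)]
  rw [Finset.sum_sub_distrib, Finset.sum_const, Finset.card_univ, Fintype.card_fun,
    Fintype.card_fin, Fintype.card_fin]
  rw [← Finset.mul_sum, ← Complex.re_sum, ← kmsInner_sum_right, pauli_sum_condE]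
  rw [kmsInner_smul_right]
  rw [kmsInner_condE_self R σ hσ hiR X]
  have hre : (((4:ℂ))^q * kmsInner (tauTensor n q R σ) (condE {i} X) (condE {i} X)).re
      = (4:ℝ)^q * kmsNormSq (tauTensor n q R σ) (condE {i} X) := by
    rw [show ((4:ℂ))^q = (((4:ℝ)^q : ℝ) : ℂ) from by push_cast; ring]
    rw [Complex.re_ofReal_mul]
    rfl
  rw [hre]
  rw [pythagoras R σ hσ hiR X]
  have : (0:ℝ) ≤ (4:ℝ)^q := by positivity
  push_cast
  ring

lemma main_ineq (hσ : σ.PosSemidef) (X : Mat n q) :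
    (4 : ℝ) ^ q * kmsNormSq (tauTensor n q R σ) (X - tauTensor n q R (ptraceIn n q R X))
      ≤ ∑ i ∈ R, ∑ p : Fin q → Fin 4,
          kmsNormSq (tauTensor n q R σ) (mComm (pauliOp n q i p) X) := by
  rw [Finset.sum_congr rfl (fun i hi => persite R σ hσ hi X)]
  rw [← Finset.mul_sum]
  rw [show X - tauTensor n q R (ptraceIn n q R X) = X - condE R X from by rw [condE_R]]
  have tel := telescope R σ hσ X R (subset_refl R)
  have pyth := pythagoras R σ hσ (subset_refl R) X
  have nn := kmsNormSq_nonneg (tauTensor n q R σ) (X - condE R X)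
  have h4 : (0:ℝ) ≤ (4:ℝ)^q := by positivity
  rw [pyth] at nn ⊢
  nlinarith [Finset.sum_nonneg (fun i (_ : i ∈ R) =>
    kmsNormSq_nonneg (tauTensor n q R σ) (X - condE {i} X))]

end PauliTau

end Depol

/-- spectral gap of the depolarizing semigroup: for `τ_R` the maximally
mixed state on the factors of `R` and `σ` any density matrix on the complementary factors,
`Σ_{a ∈ S¹_R} ‖[A^a, X]‖²_{τ_R ⊗ σ} ≥ 4^q · ‖X - τ_R ⊗ Tr_R[X]‖²_{τ_R ⊗ σ}`. -/
theorem depolarizing_semigroup_gap (n q : ℕ) (R : Finset (Fin n))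
    (σ : Matrix (CfgOut n q R) (CfgOut n q R) ℂ) (hσ : σ.PosSemidef) (hσtr : σ.trace = 1)
    (X : Mat n q) :
    (4 : ℝ) ^ q * kmsNormSq (tauTensor n q R σ) (X - tauTensor n q R (ptraceIn n q R X))
      ≤ ∑ i ∈ R, ∑ p : Fin q → Fin 4,
          kmsNormSq (tauTensor n q R σ) (mComm (pauliOp n q i p) X) :=
  Depol.main_ineq R σ hσ X

end
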